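/- arXiv:2502.03839 — 4 statements merged into one kernel-verified Lean document; each statement's English description precedes it below -/
import Mathlib

section
/- For every even integer n ≥ 2 there exists a 2-2-XOR-BN on n nodes for which the size of the minimum control node set is exactly n/2. -/
/-!
Split the nodes into the pairs `{2k, 2k + 1}` and let both nodes of a pair compute
`x_{2k} ⊕ x_{2k+1}`, so that every node has exactly the two nodes of its pair as incoming and as
outgoing nodes. Two uncontrolled nodes with the same update function agree from time `1` on, so a
control node set meets every pair and has at least `n / 2` elements. Conversely the even nodes
suffice, in two steps: the first control sets `x_{2k} ⊕ x_{2k+1}` to the target value of node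
`2k + 1`, which both nodes of the pair then take, and the second corrects node `2k`.
-/

namespace BN

variable {n : ℕ}

/-- The Boolean function `f` depends on input `j`. -/
def Depends (f : (Fin n → Bool) → Bool) (j : Fin n) : Prop :=
  ∃ x : Fin n → Bool, f (Function.update x j (!(x j))) ≠ f x

/-- The set of incoming nodes of node `i` (Γ⁻). -/
def inSet (F : Fin n → (Fin n → Bool) → Bool) (i : Fin n) : Set (Fin n) :=
  {j | Depends (F i) j}

/-- The set of outgoing nodes of node `i` (Γ⁺). -/
def outSet (F : Fin n → (Fin n → Bool) → Bool) (i : Fin n) : Set (Fin n) :=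
  {j | Depends (F j) i}

/-- The controlled trajectory: nodes in `U` get an xor-control signal. -/
def traj (F : Fin n → (Fin n → Bool) → Bool) (U : Finset (Fin n))
    (u : ℕ → Fin n → Bool) (x0 : Fin n → Bool) : ℕ → Fin n → Bool
  | 0 => x0
  | t + 1 => fun i =>
      if i ∈ U then Bool.xor (u t i) (F i (traj F U u x0 t))
      else F i (traj F U u x0 t)

/-- `U` is a control node set: any initial state can be driven to any target state. -/
def IsControlSet (F : Fin n → (Fin n → Bool) → Bool) (U : Finset (Fin n)) : Prop :=
  ∀ x0 xT : Fin n → Bool, ∃ t : ℕ, 1 ≤ t ∧ ∃ u : ℕ → Fin n → Bool, traj F U u x0 t = xT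

/-- XOR (parity) of the inputs in `S`. -/
def xorFun (S : Finset (Fin n)) (x : Fin n → Bool) : Bool :=
  decide ((S.filter (fun j => x j = true)).card % 2 = 1)

/-- `f` is the XOR of `k` distinct inputs, or its negation. -/
def IsKXor (k : ℕ) (f : (Fin n → Bool) → Bool) : Prop :=
  ∃ S : Finset (Fin n), S.card = k ∧ (f = xorFun S ∨ f = fun x => !(xorFun S x))

/-- A `k`-`k`-XOR-BN: each function is a `k`-input XOR (or negation) and
every node has indegree `k` and outdegree `k`. -/
def IsKKXorBN (k : ℕ) (F : Fin n → (Fin n → Bool) → Bool) : Prop :=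
  (∀ i, IsKXor k (F i)) ∧ ∀ i, (inSet F i).ncard = k ∧ (outSet F i).ncard = k

theorem traj_succ_apply (F : Fin n → (Fin n → Bool) → Bool) (U : Finset (Fin n))
    (u : ℕ → Fin n → Bool) (x0 : Fin n → Bool) (t : ℕ) (i : Fin n) :
    traj F U u x0 (t + 1) i =
      if i ∈ U then xor (u t i) (F i (traj F U u x0 t)) else F i (traj F U u x0 t) :=
  rfl

theorem xorFun_pair {a b : Fin n} (hab : a ≠ b) (x : Fin n → Bool) :
    xorFun {a, b} x = xor (x a) (x b) := by
  unfold xorFun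
  rw [Finset.filter_insert, Finset.filter_singleton]
  cases hxa : x a <;> cases hxb : x b <;>
    simp [Finset.card_insert_of_notMem, hab]

theorem depends_xorFun_pair_iff {a b : Fin n} (hab : a ≠ b) (j : Fin n) :
    Depends (xorFun {a, b}) j ↔ j = a ∨ j = b := by
  simp only [Depends, xorFun_pair hab]
  constructor
  · rintro ⟨x, hx⟩
    by_contra! hj
    simp [Function.update_of_ne hj.1.symm, Function.update_of_ne hj.2.symm] at hx
  · rintro (rfl | rfl)
    · exact ⟨fun _ => false, by simp [Function.update_of_ne hab.symm]⟩
    · exact ⟨fun _ => false, by simp [Function.update_of_ne hab]⟩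

theorem IsControlSet.mem_or_mem_of_eq {F : Fin n → (Fin n → Bool) → Bool} {U : Finset (Fin n)}
    (hU : IsControlSet F U) {i j : Fin n} (hij : i ≠ j) (hF : F i = F j) : i ∈ U ∨ j ∈ U := by
  by_contra! hij_notMem
  obtain ⟨t, ht, u, hu⟩ := hU (fun _ => false) (fun k => decide (k = i))
  obtain ⟨s, rfl⟩ : ∃ s, t = s + 1 := ⟨t - 1, by omega⟩
  have h_agree : traj F U u (fun _ => false) (s + 1) i = traj F U u (fun _ => false) (s + 1) j := by
    simp [traj_succ_apply, hij_notMem.1, hij_notMem.2, hF]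
  rw [hu] at h_agree
  simp [hij.symm] at h_agree

section PairNetwork

variable {m : ℕ}

def pairOf (i : Fin (2 * m)) : Fin m := ⟨i / 2, by omega⟩

def pairLo (k : Fin m) : Fin (2 * m) := ⟨2 * k, by omega⟩

def pairHi (k : Fin m) : Fin (2 * m) := ⟨2 * k + 1, by omega⟩

theorem pairLo_ne_pairHi (k : Fin m) : pairLo k ≠ pairHi k := by
  simp [pairLo, pairHi, Fin.ext_iff]

theorem pairLo_injective : Function.Injective (pairLo (m := m)) := by
  intro k l h
  simp only [pairLo, Fin.ext_iff] at h ⊢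
  omega

theorem pairHi_ne_pairLo (k l : Fin m) : pairHi k ≠ pairLo l := by
  simp only [pairLo, pairHi, ne_eq, Fin.ext_iff]
  omega

theorem eq_pairLo_or_eq_pairHi_iff {i : Fin (2 * m)} {k : Fin m} :
    i = pairLo k ∨ i = pairHi k ↔ pairOf i = k := by
  simp only [pairLo, pairHi, pairOf, Fin.ext_iff]
  omega

theorem eq_pairLo_or_eq_pairHi (i : Fin (2 * m)) : i = pairLo (pairOf i) ∨ i = pairHi (pairOf i) :=
  eq_pairLo_or_eq_pairHi_iff.2 rfl

@[simp]
theorem pairOf_pairLo (k : Fin m) : pairOf (pairLo k) = k :=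
  eq_pairLo_or_eq_pairHi_iff.1 (Or.inl rfl)

@[simp]
theorem pairOf_pairHi (k : Fin m) : pairOf (pairHi k) = k :=
  eq_pairLo_or_eq_pairHi_iff.1 (Or.inr rfl)

def pairNet (m : ℕ) : Fin (2 * m) → (Fin (2 * m) → Bool) → Bool :=
  fun i => xorFun {pairLo (pairOf i), pairHi (pairOf i)}

theorem pairNet_apply (i : Fin (2 * m)) (x : Fin (2 * m) → Bool) :
    pairNet m i x = xor (x (pairLo (pairOf i))) (x (pairHi (pairOf i))) :=
  xorFun_pair (pairLo_ne_pairHi _) x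

theorem inSet_pairNet (i : Fin (2 * m)) :
    inSet (pairNet m) i = {pairLo (pairOf i), pairHi (pairOf i)} :=
  Set.ext fun j => depends_xorFun_pair_iff (pairLo_ne_pairHi _) j

theorem outSet_pairNet (i : Fin (2 * m)) :
    outSet (pairNet m) i = {pairLo (pairOf i), pairHi (pairOf i)} := by
  ext j
  simp only [outSet, pairNet, Set.mem_ofPred_eq, depends_xorFun_pair_iff (pairLo_ne_pairHi _),
    eq_pairLo_or_eq_pairHi_iff, Set.mem_insert_iff, Set.mem_singleton_iff]
  exact eq_comm

theorem isKKXorBN_pairNet : IsKKXorBN 2 (pairNet m) :=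
  ⟨fun i => ⟨_, Finset.card_pair (pairLo_ne_pairHi _), Or.inl rfl⟩, fun i => by
    simp only [inSet_pairNet, outSet_pairNet, Set.ncard_pair (pairLo_ne_pairHi _), and_self]⟩

theorem isControlSet_pairNet_image_pairLo :
    IsControlSet (pairNet m) (Finset.univ.image pairLo) := by
  intro x0 xT
  set U := Finset.univ.image (pairLo (m := m))
  have hLo (k : Fin m) : pairLo k ∈ U := Finset.mem_image_of_mem _ (Finset.mem_univ k)
  have hHi (k : Fin m) : pairHi k ∉ U := by
    simp only [U, Finset.mem_image, Finset.mem_univ, true_and, not_exists]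
    exact fun l h => pairHi_ne_pairLo k l h.symm
  let u : ℕ → Fin (2 * m) → Bool := fun t j =>
    if t = 0 then xT (pairHi (pairOf j)) else xor (xT j) (xT (pairHi (pairOf j)))
  have hPair (k : Fin m) :
      xor (traj (pairNet m) U u x0 1 (pairLo k)) (traj (pairNet m) U u x0 1 (pairHi k)) =
        xT (pairHi k) := by
    simp [traj_succ_apply, hLo, hHi, u, pairNet_apply]
  refine ⟨2, by norm_num, u, funext fun i => ?_⟩
  have hStep : pairNet m i (traj (pairNet m) U u x0 1) = xT (pairHi (pairOf i)) := by
    rw [pairNet_apply, hPair]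
  rcases eq_pairLo_or_eq_pairHi i with hi | hi
  · rw [traj_succ_apply, if_pos (hi ▸ hLo _), hStep]
    simp [u]
  · rw [traj_succ_apply, if_neg (hi ▸ hHi _), hStep, ← hi]

theorem le_card_of_isControlSet_pairNet {U : Finset (Fin (2 * m))}
    (hU : IsControlSet (pairNet m) U) : m ≤ U.card := by
  have hSurj : Finset.univ ⊆ U.image pairOf := fun k _ => by
    have hEq : pairNet m (pairLo k) = pairNet m (pairHi k) := by simp [pairNet]
    rcases hU.mem_or_mem_of_eq (pairLo_ne_pairHi k) hEq with h | h
    · exact Finset.mem_image.2 ⟨_, h, pairOf_pairLo k⟩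
    · exact Finset.mem_image.2 ⟨_, h, pairOf_pairHi k⟩
  calc m = (Finset.univ : Finset (Fin m)).card := (Finset.card_fin m).symm
    _ ≤ (U.image pairOf).card := Finset.card_le_card hSurj
    _ ≤ U.card := Finset.card_image_le

end PairNetwork

theorem stmt1_general (n : ℕ) (hne : Even n) :
    ∃ F : Fin n → (Fin n → Bool) → Bool, IsKKXorBN 2 F ∧
      (∃ U : Finset (Fin n), IsControlSet F U ∧ U.card = n / 2) ∧
      ∀ U : Finset (Fin n), IsControlSet F U → n / 2 ≤ U.card := by
  obtain ⟨m, rfl⟩ := hne.two_dvd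
  rw [Nat.mul_div_cancel_left m two_pos]
  refine ⟨pairNet m, isKKXorBN_pairNet, ⟨_, isControlSet_pairNet_image_pairLo, ?_⟩,
    fun U hU => le_card_of_isControlSet_pairNet hU⟩
  rw [Finset.card_image_of_injective _ pairLo_injective, Finset.card_univ, Fintype.card_fin]

/-- For every even `n ≥ 2` there exists a 2-2-XOR-BN on `n` nodes whose
minimum control node set has size exactly `n / 2`. -/
theorem stmt1 (n : ℕ) (hn : 2 ≤ n) (hne : Even n) :
    ∃ F : Fin n → (Fin n → Bool) → Bool, IsKKXorBN 2 F ∧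
      (∃ U : Finset (Fin n), IsControlSet F U ∧ U.card = n / 2) ∧
      ∀ U : Finset (Fin n), IsControlSet F U → n / 2 ≤ U.card :=
  stmt1_general n hne

end BN
end

section
/- For each odd integer k ≥ 3 and each positive integer m, there exists a k-k-XOR-BN on n = (k+1)m nodes that has a control node set of size k+1. -/
namespace BN

variable {n : ℕ}

/-! ### Auxiliary material: parity in `ZMod 2` -/

def b2 (b : Bool) : ZMod 2 := if b then 1 else 0

lemma b2_injective : Function.Injective b2 := by decide

def par (S : Finset (Fin n)) (x : Fin n → Bool) : ZMod 2 := ∑ j ∈ S, b2 (x j)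

lemma par_eq_cast (S : Finset (Fin n)) (x : Fin n → Bool) :
    par S x = ((S.filter fun j => x j = true).card : ZMod 2) := by
  rw [Finset.card_filter, Nat.cast_sum]
  apply Finset.sum_congr rfl
  intro j _
  by_cases h : x j = true <;> simp [h, b2]

lemma b2_xorFun (S : Finset (Fin n)) (x : Fin n → Bool) :
    b2 (xorFun S x) = par S x := by
  rw [par_eq_cast]
  unfold xorFun b2
  rcases Nat.mod_two_eq_zero_or_one ((S.filter fun j => x j = true).card) with h | h
  · rw [← ZMod.natCast_mod _ 2, h]
    simp [h]
  · rw [← ZMod.natCast_mod _ 2, h]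
    simp [h]

lemma xorFun_congr {S : Finset (Fin n)} {x y : Fin n → Bool}
    (h : ∀ j ∈ S, x j = y j) : xorFun S x = xorFun S y := by
  unfold xorFun
  have h2 : Finset.filter (fun j => x j = true) S = Finset.filter (fun j => y j = true) S :=
    Finset.filter_congr (fun j hj => by rw [h j hj])
  rw [h2]

lemma par_update_mem {S : Finset (Fin n)} {j : Fin n} (hj : j ∈ S) (x : Fin n → Bool) (b : Bool) :
    par S (Function.update x j b) = par (S.erase j) x + b2 b := by
  unfold par
  rw [← Finset.add_sum_erase _ _ hj, Function.update_self, add_comm]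
  congr 1
  apply Finset.sum_congr rfl
  intro a ha
  rw [Function.update_of_ne (Finset.ne_of_mem_erase ha)]

lemma par_mem {S : Finset (Fin n)} {j : Fin n} (hj : j ∈ S) (x : Fin n → Bool) :
    par S x = par (S.erase j) x + b2 (x j) := by
  unfold par
  rw [← Finset.add_sum_erase _ _ hj, add_comm]

lemma depends_xorFun (S : Finset (Fin n)) (j : Fin n) :
    Depends (xorFun S) j ↔ j ∈ S := by
  constructor
  · rintro ⟨x, hx⟩
    by_contra hj
    apply hx
    apply xorFun_congr
    intro a ha
    apply Function.update_of_ne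
    rintro rfl
    exact hj ha
  · intro hj
    refine ⟨fun _ => false, fun h => ?_⟩
    have h2 := congrArg b2 h
    rw [b2_xorFun, b2_xorFun, show (!(false : Bool)) = true from rfl,
      par_update_mem hj, par_mem hj] at h2
    simp [b2] at h2

lemma xorFun_image {M : ℕ} (g : Fin M → Fin n) (hg : Function.Injective g)
    (T : Finset (Fin M)) (x : Fin n → Bool) :
    xorFun (T.image g) x = xorFun T (fun s => x (g s)) := by
  unfold xorFun
  rw [Finset.filter_image, Finset.card_image_of_injective _ hg]

/-! ### The construction -/

section Construction

variable (k m : ℕ) [NeZero m]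
set_option linter.unusedSectionVars false

def blkN (i : Fin ((k + 1) * m)) : Fin m :=
  ⟨(i : ℕ) / (k + 1), Nat.div_lt_of_lt_mul i.isLt⟩

def posN (i : Fin ((k + 1) * m)) : Fin (k + 1) :=
  ⟨(i : ℕ) % (k + 1), Nat.mod_lt _ (Nat.succ_pos k)⟩

def nodeN (b : Fin m) (s : Fin (k + 1)) : Fin ((k + 1) * m) :=
  ⟨(s : ℕ) + (b : ℕ) * (k + 1), by
    calc (s : ℕ) + (b : ℕ) * (k + 1) < (k + 1) + (b : ℕ) * (k + 1) :=
          Nat.add_lt_add_right s.isLt _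
      _ = ((b : ℕ) + 1) * (k + 1) := by ring
      _ ≤ m * (k + 1) := Nat.mul_le_mul_right _ b.isLt
      _ = (k + 1) * m := mul_comm _ _⟩

lemma blkN_nodeN (b : Fin m) (s : Fin (k + 1)) : blkN k m (nodeN k m b s) = b := by
  apply Fin.ext
  show ((s : ℕ) + (b : ℕ) * (k + 1)) / (k + 1) = b
  rw [Nat.add_mul_div_right _ _ (Nat.succ_pos k), Nat.div_eq_of_lt s.isLt, Nat.zero_add]

lemma posN_nodeN (b : Fin m) (s : Fin (k + 1)) : posN k m (nodeN k m b s) = s := by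
  apply Fin.ext
  show ((s : ℕ) + (b : ℕ) * (k + 1)) % (k + 1) = s
  rw [Nat.add_mul_mod_self_right, Nat.mod_eq_of_lt s.isLt]

lemma nodeN_blkN_posN (i : Fin ((k + 1) * m)) : nodeN k m (blkN k m i) (posN k m i) = i := by
  apply Fin.ext
  exact Nat.mod_add_div' _ _

lemma nodeN_injective (b : Fin m) : Function.Injective (nodeN k m b) := by
  intro s t h
  have := congrArg (posN k m) h
  rwa [posN_nodeN, posN_nodeN] at this

def Sset (i : Fin ((k + 1) * m)) : Finset (Fin ((k + 1) * m)) :=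
  (Finset.univ.filter (fun s : Fin (k + 1) => s ≠ posN k m i)).image
    (nodeN k m (blkN k m i - 1))

def Tset (i : Fin ((k + 1) * m)) : Finset (Fin ((k + 1) * m)) :=
  (Finset.univ.filter (fun s : Fin (k + 1) => s ≠ posN k m i)).image
    (nodeN k m (blkN k m i + 1))

lemma card_Sset (i : Fin ((k + 1) * m)) : (Sset k m i).card = k := by
  unfold Sset
  rw [Finset.card_image_of_injective _ (nodeN_injective k m _), Finset.filter_ne',
    Finset.card_erase_of_mem (Finset.mem_univ _), Finset.card_univ, Fintype.card_fin]
  omega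

lemma card_Tset (i : Fin ((k + 1) * m)) : (Tset k m i).card = k := by
  unfold Tset
  rw [Finset.card_image_of_injective _ (nodeN_injective k m _), Finset.filter_ne',
    Finset.card_erase_of_mem (Finset.mem_univ _), Finset.card_univ, Fintype.card_fin]
  omega

lemma mem_Sset (i j : Fin ((k + 1) * m)) :
    j ∈ Sset k m i ↔ blkN k m j = blkN k m i - 1 ∧ posN k m j ≠ posN k m i := by
  unfold Sset
  simp only [Finset.mem_image, Finset.mem_filter, Finset.mem_univ, true_and]
  constructor
  · rintro ⟨s, hs, rfl⟩
    rw [blkN_nodeN, posN_nodeN]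
    exact ⟨rfl, hs⟩
  · rintro ⟨hb, hp⟩
    exact ⟨posN k m j, hp, by rw [← hb, nodeN_blkN_posN]⟩

lemma mem_Tset (i j : Fin ((k + 1) * m)) :
    j ∈ Tset k m i ↔ blkN k m j = blkN k m i + 1 ∧ posN k m j ≠ posN k m i := by
  unfold Tset
  simp only [Finset.mem_image, Finset.mem_filter, Finset.mem_univ, true_and]
  constructor
  · rintro ⟨s, hs, rfl⟩
    rw [blkN_nodeN, posN_nodeN]
    exact ⟨rfl, hs⟩
  · rintro ⟨hb, hp⟩
    exact ⟨posN k m j, hp, by rw [← hb, nodeN_blkN_posN]⟩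

lemma mem_Sset_iff_mem_Tset (i j : Fin ((k + 1) * m)) :
    i ∈ Sset k m j ↔ j ∈ Tset k m i := by
  rw [mem_Sset, mem_Tset]
  constructor
  · rintro ⟨hb, hp⟩
    exact ⟨sub_eq_iff_eq_add.mp hb.symm, hp.symm⟩
  · rintro ⟨hb, hp⟩
    exact ⟨(sub_eq_iff_eq_add.mpr hb).symm, hp.symm⟩

/-- The network: each node is the XOR of the `k` nodes of the previous block
at the other positions. -/
def Fnet : Fin ((k + 1) * m) → (Fin ((k + 1) * m) → Bool) → Bool :=
  fun i => xorFun (Sset k m i)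

lemma sub_one_val (b : Fin m) (hb : b ≠ 0) : ((b - 1 : Fin m) : ℕ) = (b : ℕ) - 1 := by
  rcases m with _ | m'
  · exact absurd rfl (NeZero.ne 0)
  · rw [Fin.coe_sub_one, if_neg hb]

/-! ### Dynamics helpers -/

/-- One application of the block-transition map `A` (complement-of-one XOR). -/
def Aapp (w : Fin (k + 1) → Bool) (q : Fin (k + 1)) : Bool :=
  xorFun (Finset.univ.erase q) w

/-- `A^r`, using `A² = id`. -/
def Apow (r : ℕ) (w : Fin (k + 1) → Bool) : Fin (k + 1) → Bool :=
  if r % 2 = 0 then w else Aapp k w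

lemma Aapp_Aapp (hkodd : Odd k) (w : Fin (k + 1) → Bool) : Aapp k (Aapp k w) = w := by
  funext q
  apply b2_injective
  show b2 (xorFun (Finset.univ.erase q) (Aapp k w)) = b2 (w q)
  rw [b2_xorFun]
  have hA : ∀ q' : Fin (k + 1), b2 (Aapp k w q') = par Finset.univ w - b2 (w q') := by
    intro q'
    show b2 (xorFun (Finset.univ.erase q') w) = _
    rw [b2_xorFun]
    unfold par
    rw [Finset.sum_erase_eq_sub (Finset.mem_univ q')]
  unfold par
  calc ∑ q' ∈ Finset.univ.erase q, b2 (Aapp k w q')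
      = ∑ q' ∈ Finset.univ.erase q, (par Finset.univ w - b2 (w q')) :=
        Finset.sum_congr rfl fun q' _ => hA q'
    _ = (Finset.univ.erase q).card • par Finset.univ w
          - ∑ q' ∈ Finset.univ.erase q, b2 (w q') := by
        rw [Finset.sum_sub_distrib, Finset.sum_const]
    _ = k • par Finset.univ w - (par Finset.univ w - b2 (w q)) := by
        rw [Finset.card_erase_of_mem (Finset.mem_univ _), Finset.card_univ, Fintype.card_fin,
          Finset.sum_erase_eq_sub (Finset.mem_univ q)]
        rfl
    _ = b2 (w q) := by
        have hk1 : (k : ZMod 2) = 1 := by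
          rw [← ZMod.natCast_mod _ 2, Nat.odd_iff.mp hkodd, Nat.cast_one]
        rw [nsmul_eq_mul, hk1, one_mul]
        ring

lemma Aapp_Apow (hkodd : Odd k) (r : ℕ) (w : Fin (k + 1) → Bool) :
    Aapp k (Apow k r w) = Apow k (r + 1) w := by
  unfold Apow
  rcases Nat.mod_two_eq_zero_or_one r with h | h
  · rw [if_pos h, if_neg (by omega)]
  · rw [if_neg (by omega), if_pos (by omega), Aapp_Aapp k hkodd]

lemma Apow_congr (r r' : ℕ) (h : r % 2 = r' % 2) (w : Fin (k + 1) → Bool) :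
    Apow k r w = Apow k r' w := by
  unfold Apow
  rw [h]

/-- Block index constructor from a natural number (mod `m`). -/
def mkB (a : ℕ) : Fin m := ⟨a % m, Nat.mod_lt _ (Nat.pos_of_ne_zero (NeZero.ne m))⟩

lemma mkB_self (b : Fin m) : mkB m (b : ℕ) = b :=
  Fin.ext (Nat.mod_eq_of_lt b.isLt)

/-- The designed trajectory: blocks already in the "controlled cone" carry
(pre-images of) the target state; the others carry the free evolution of `x0`. -/
def ySeq (x0 xT : Fin ((k + 1) * m) → Bool) (s : ℕ) (i : Fin ((k + 1) * m)) : Bool :=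
  if (blkN k m i : ℕ) < s then
    Apow k (m - s) (fun q => xT (nodeN k m (mkB m ((blkN k m i : ℕ) + (m - s))) q)) (posN k m i)
  else
    Apow k s (fun q => x0 (nodeN k m (mkB m ((blkN k m i : ℕ) - s)) q)) (posN k m i)

lemma Fnet_eq_Aapp (i : Fin ((k + 1) * m)) (x : Fin ((k + 1) * m) → Bool) :
    Fnet k m i x = Aapp k (fun q => x (nodeN k m (blkN k m i - 1) q)) (posN k m i) := by
  show xorFun (Sset k m i) x = xorFun (Finset.univ.erase (posN k m i)) _
  unfold Sset
  rw [xorFun_image _ (nodeN_injective k m _), Finset.filter_ne']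

lemma ySeq_zero (x0 xT : Fin ((k + 1) * m) → Bool) (i : Fin ((k + 1) * m)) :
    ySeq k m x0 xT 0 i = x0 i := by
  unfold ySeq Apow
  rw [if_neg (by omega), if_pos (by norm_num)]
  rw [show mkB m ((blkN k m i : ℕ) - 0) = blkN k m i from by rw [Nat.sub_zero, mkB_self],
    nodeN_blkN_posN]

lemma ySeq_final (x0 xT : Fin ((k + 1) * m) → Bool) (i : Fin ((k + 1) * m)) :
    ySeq k m x0 xT m i = xT i := by
  unfold ySeq Apow
  rw [if_pos (blkN k m i).isLt, Nat.sub_self, if_pos (by norm_num)]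
  rw [show mkB m ((blkN k m i : ℕ) + 0) = blkN k m i from by rw [Nat.add_zero, mkB_self],
    nodeN_blkN_posN]

lemma ySeq_step (hkodd : Odd k) (x0 xT : Fin ((k + 1) * m) → Bool) (t : ℕ) (ht : t + 1 ≤ m)
    (i : Fin ((k + 1) * m)) (hb : blkN k m i ≠ 0) :
    Fnet k m i (ySeq k m x0 xT t) = ySeq k m x0 xT (t + 1) i := by
  have hbv : 0 < (blkN k m i : ℕ) := by
    rcases Nat.eq_zero_or_pos (blkN k m i : ℕ) with h | h
    · exact absurd (Fin.ext (by simpa using h)) hb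
    · exact h
  have hsub : ((blkN k m i - 1 : Fin m) : ℕ) = (blkN k m i : ℕ) - 1 :=
    sub_one_val m _ hb
  rw [Fnet_eq_Aapp]
  have hin : (fun q => ySeq k m x0 xT t (nodeN k m (blkN k m i - 1) q)) =
      if (blkN k m i : ℕ) - 1 < t then
        Apow k (m - t) (fun q => xT (nodeN k m (mkB m ((blkN k m i : ℕ) - 1 + (m - t))) q))
      else
        Apow k t (fun q => x0 (nodeN k m (mkB m ((blkN k m i : ℕ) - 1 - t)) q)) := by
    funext q
    unfold ySeq
    rw [blkN_nodeN, posN_nodeN, hsub]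
    by_cases h : (blkN k m i : ℕ) - 1 < t
    · rw [if_pos h, if_pos h]
    · rw [if_neg h, if_neg h]
  rw [hin]
  by_cases hc : (blkN k m i : ℕ) < t + 1
  · rw [if_pos (by omega), Aapp_Apow k hkodd]
    rw [show ySeq k m x0 xT (t + 1) i =
        Apow k (m - (t + 1))
          (fun q => xT (nodeN k m (mkB m ((blkN k m i : ℕ) + (m - (t + 1)))) q))
          (posN k m i) from by unfold ySeq; rw [if_pos hc]]
    rw [show mkB m ((blkN k m i : ℕ) - 1 + (m - t)) =
        mkB m ((blkN k m i : ℕ) + (m - (t + 1))) from congrArg _ (by omega)]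
    rw [Apow_congr k (m - t + 1) (m - (t + 1)) (by omega)]
  · rw [if_neg (by omega), Aapp_Apow k hkodd]
    rw [show ySeq k m x0 xT (t + 1) i =
        Apow k (t + 1)
          (fun q => x0 (nodeN k m (mkB m ((blkN k m i : ℕ) - (t + 1))) q))
          (posN k m i) from by unfold ySeq; rw [if_neg hc]]
    rw [show mkB m ((blkN k m i : ℕ) - 1 - t) =
        mkB m ((blkN k m i : ℕ) - (t + 1)) from congrArg _ (by omega)]

end Construction

/-- For each odd `k ≥ 3` and each positive `m`, there exists a
`k`-`k`-XOR-BN on `n = (k+1)·m` nodes with a control node set of size `k + 1`. -/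
theorem stmt7 (k m : ℕ) (hk : 3 ≤ k) (hkodd : Odd k) (hm : 0 < m) :
    ∃ F : Fin ((k + 1) * m) → (Fin ((k + 1) * m) → Bool) → Bool, IsKKXorBN k F ∧
      ∃ U : Finset (Fin ((k + 1) * m)), IsControlSet F U ∧ U.card = k + 1 := by
  haveI : NeZero m := ⟨hm.ne'⟩
  refine ⟨Fnet k m, ⟨fun i => ⟨Sset k m i, card_Sset k m i, Or.inl rfl⟩,
    fun i => ⟨?_, ?_⟩⟩, Finset.univ.image (nodeN k m 0), ?_, ?_⟩
  · have h : inSet (Fnet k m) i = ↑(Sset k m i) := Set.ext fun j => depends_xorFun _ _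
    rw [h, Set.ncard_coe_finset, card_Sset]
  · have h : outSet (Fnet k m) i = ↑(Tset k m i) := Set.ext fun j =>
      Iff.trans (depends_xorFun (Sset k m j) i) (mem_Sset_iff_mem_Tset k m i j)
    rw [h, Set.ncard_coe_finset, card_Tset]
  · intro x0 xT
    set u : ℕ → Fin ((k + 1) * m) → Bool :=
      fun t i => Bool.xor (ySeq k m x0 xT (t + 1) i) (Fnet k m i (ySeq k m x0 xT t)) with hu
    refine ⟨m, hm, u, ?_⟩
    have htraj : ∀ s, s ≤ m →
        traj (Fnet k m) (Finset.univ.image (nodeN k m 0)) u x0 s = ySeq k m x0 xT s := by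
      intro s
      induction s with
      | zero => exact fun _ => funext fun i => (ySeq_zero k m x0 xT i).symm
      | succ t ih =>
        intro hs
        funext i
        simp only [traj]
        rw [ih (by omega)]
        by_cases hU : i ∈ Finset.univ.image (nodeN k m 0)
        · rw [if_pos hU]
          simp only [hu]
          rw [Bool.xor_assoc, Bool.xor_self, Bool.xor_false]
        · rw [if_neg hU]
          apply ySeq_step k m hkodd x0 xT t (by omega) i
          intro h0
          apply hU
          rw [Finset.mem_image]
          exact ⟨posN k m i, Finset.mem_univ _, by rw [← h0, nodeN_blkN_posN]⟩
    rw [htraj m le_rfl]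
    exact funext fun i => ySeq_final k m x0 xT i
  · rw [Finset.card_image_of_injective _ (nodeN_injective k m 0), Finset.card_univ,
      Fintype.card_fin]

end BN
end

section
/- For every integer n > 2, there exists a 2-AND-BN on n nodes (every node has indegree 2 and each update function is the conjunction of its two inputs, with no negations) for which the size of the minimum control node set is 2. -/
namespace BN

variable {n : ℕ}

/-- AND of the inputs in `S` (no negations). -/
def andFun (S : Finset (Fin n)) (x : Fin n → Bool) : Bool :=
  decide (∀ j ∈ S, x j = true)

/-- `f` is the conjunction of `k` distinct inputs (no negations). -/
def IsSimpleKAnd (k : ℕ) (f : (Fin n → Bool) → Bool) : Prop :=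
  ∃ S : Finset (Fin n), S.card = k ∧ f = andFun S

/-- A simple `k`-`k`-AND-BN: each function is a `k`-input AND (no negations) and
every node has indegree `k` and outdegree `k`. -/
def IsSimpleKKAndBN (k : ℕ) (F : Fin n → (Fin n → Bool) → Bool) : Prop :=
  (∀ i, IsSimpleKAnd k (F i)) ∧ ∀ i, (inSet F i).ncard = k ∧ (outSet F i).ncard = k

/-! Nodes `1 → 2 → ⋯ → n-1` form a shift register clocked by node `0`: while node `0` holds
`true`, node `i ≥ 2` copies node `i - 1`. Controlling `0` and `1`, one keeps the clock on and
feeds the target values into node `1` in reverse order, reaching any state after `n - 1` steps.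
Conversely, starting from the all-`false` state, a set `Z` of uncontrolled nodes each having an
input in `Z` stays `false` forever; each of `{0, 1}`, `{0, n-1}` and `{1, …, n-1}` is such a set,
and a single control node misses one of them. -/

lemma andFun_pair (a b : Fin n) (x : Fin n → Bool) : andFun {a, b} x = (x a && x b) := by
  simp [andFun]

lemma andFun_eq_false_of_mem {S : Finset (Fin n)} {x : Fin n → Bool} {j : Fin n} (hj : j ∈ S)
    (hx : x j = false) : andFun S x = false :=
  decide_eq_false fun h => by simpa [hx] using h j hj

/-- The trajectory in which each controlled node `i` takes the value `v t i` at time `t + 1`. -/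
def steeredTraj (F : Fin n → (Fin n → Bool) → Bool) (U : Finset (Fin n))
    (v : ℕ → Fin n → Bool) (x0 : Fin n → Bool) : ℕ → Fin n → Bool
  | 0 => x0
  | t + 1 => fun i => if i ∈ U then v t i else F i (steeredTraj F U v x0 t)

section Steering

variable {F : Fin n → (Fin n → Bool) → Bool} {U : Finset (Fin n)} {v : ℕ → Fin n → Bool}
  {x0 : Fin n → Bool} {i : Fin n}

lemma steeredTraj_succ_of_mem (hi : i ∈ U) (t : ℕ) : steeredTraj F U v x0 (t + 1) i = v t i := by
  simp [steeredTraj, hi]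

lemma steeredTraj_succ_of_notMem (hi : i ∉ U) (t : ℕ) :
    steeredTraj F U v x0 (t + 1) i = F i (steeredTraj F U v x0 t) := by
  simp [steeredTraj, hi]

lemma traj_eq_steeredTraj :
    traj F U (fun t i => Bool.xor (v t i) (F i (steeredTraj F U v x0 t))) x0 =
      steeredTraj F U v x0 := by
  funext t
  induction t with
  | zero => rfl
  | succ t ih =>
    funext i
    simp only [traj, steeredTraj, ih]
    split_ifs <;> simp

lemma isControlSet_of_steeredTraj
    (h : ∀ x0 xT, ∃ t, 1 ≤ t ∧ ∃ v, steeredTraj F U v x0 t = xT) : IsControlSet F U := by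
  intro x0 xT
  obtain ⟨t, ht, v, hv⟩ := h x0 xT
  exact ⟨t, ht, _, by rw [traj_eq_steeredTraj, hv]⟩

end Steering

lemma traj_andFun_eq_false {S : Fin n → Finset (Fin n)} {U Z : Finset (Fin n)}
    (hZU : Disjoint Z U) (hZ : ∀ i ∈ Z, ∃ j ∈ S i, j ∈ Z) (u : ℕ → Fin n → Bool) (t : ℕ) :
    ∀ i ∈ Z, traj (fun i => andFun (S i)) U u (fun _ => false) t i = false := by
  induction t with
  | zero => exact fun _ _ => rfl
  | succ t ih =>
    intro i hi
    obtain ⟨j, hjS, hjZ⟩ := hZ i hi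
    simp only [traj, if_neg (Finset.disjoint_left.mp hZU hi)]
    exact andFun_eq_false_of_mem hjS (ih j hjZ)

lemma not_isControlSet_andFun {S : Fin n → Finset (Fin n)} {U Z : Finset (Fin n)}
    (hZne : Z.Nonempty) (hZU : Disjoint Z U) (hZ : ∀ i ∈ Z, ∃ j ∈ S i, j ∈ Z) :
    ¬ IsControlSet (fun i => andFun (S i)) U := by
  intro hU
  obtain ⟨i, hi⟩ := hZne
  obtain ⟨t, -, u, hu⟩ := hU (fun _ => false) (fun _ => true)
  simpa [traj_andFun_eq_false hZU hZ u t i hi] using congrFun hu i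

def shiftInputs (m : ℕ) (i : Fin (m + 3)) : Finset (Fin (m + 3)) :=
  if i = 0 then {Fin.last _, 1} else if i = 1 then {0, Fin.last _} else {i - 1, 0}

def shiftNet (m : ℕ) (i : Fin (m + 3)) : (Fin (m + 3) → Bool) → Bool :=
  andFun (shiftInputs m i)

section ShiftNet

variable {m : ℕ}

@[simp] lemma shiftInputs_zero : shiftInputs m 0 = {Fin.last _, 1} := rfl

@[simp] lemma shiftInputs_one : shiftInputs m 1 = {0, Fin.last _} := by
  simp [shiftInputs]

lemma shiftInputs_of_ne {i : Fin (m + 3)} (h0 : i ≠ 0) (h1 : i ≠ 1) :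
    shiftInputs m i = {i - 1, 0} := by
  simp [shiftInputs, h0, h1]

lemma card_shiftInputs (i : Fin (m + 3)) : (shiftInputs m i).card = 2 := by
  unfold shiftInputs
  split_ifs with h0 h1 <;> refine Finset.card_pair ?_
  · simp [Fin.ext_iff]
  · simp [Fin.ext_iff]
  · exact sub_ne_zero.mpr h1

lemma two_le_val_of_ne {i : Fin (m + 3)} (h0 : i ≠ 0) (h1 : i ≠ 1) : 2 ≤ i.val := by
  rw [Ne, Fin.ext_iff] at h0 h1
  simp only [Fin.val_zero, Fin.val_one] at h0 h1
  omega

lemma steeredTraj_shiftNet {v : ℕ → Fin (m + 3) → Bool} {x0 : Fin (m + 3) → Bool}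
    (hclock : ∀ t ≤ m, v t 0 = true) (s : ℕ) (hs : s ≤ m + 2) (i : Fin (m + 3))
    (hi1 : 1 ≤ i.val) (his : i.val ≤ s) :
    steeredTraj (shiftNet m) {0, 1} v x0 s i = v (s - i.val) 1 := by
  induction s generalizing i with
  | zero => omega
  | succ s ih =>
    by_cases h1 : i = 1
    · subst h1
      simp [steeredTraj_succ_of_mem]
    have h0 : i ≠ 0 := by rintro rfl; simp at hi1
    have h2 := two_le_val_of_ne h0 h1
    have hval : (i - 1).val = i.val - 1 := by rw [Fin.coe_sub_one, if_neg h0]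
    obtain ⟨t, rfl⟩ : ∃ t, s = t + 1 := ⟨s - 1, by omega⟩
    rw [steeredTraj_succ_of_notMem (by simp [h0, h1]), shiftNet, shiftInputs_of_ne h0 h1,
      andFun_pair, steeredTraj_succ_of_mem (i := 0) (by simp) t, hclock t (by omega),
      ih (by omega) (i - 1) (by omega) (by omega), hval, Bool.and_true]
    congr 1
    omega

lemma isControlSet_shiftNet : IsControlSet (shiftNet m) {0, 1} := by
  refine isControlSet_of_steeredTraj fun x0 xT => ⟨m + 2, by omega, ?_⟩
  -- node `1` receives `xT i` at time `m + 2 - i.val`, so that it reaches node `i` at time `m + 2`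
  refine ⟨fun t i => if i = 0 then (if t = m + 1 then xT 0 else true)
    else xT ⟨m + 2 - t, by omega⟩, ?_⟩
  funext i
  by_cases h0 : i = 0
  · subst h0
    simp [steeredTraj_succ_of_mem]
  · rw [steeredTraj_shiftNet (fun t ht => by simp [show t ≠ m + 1 by omega]) _ le_rfl i
      (Nat.one_le_iff_ne_zero.mpr (Fin.val_ne_zero_iff.mpr h0)) (by omega)]
    simp only [one_ne_zero, if_false]
    congr 1
    ext
    simp only
    omega

lemma two_le_card_of_isControlSet_shiftNet {U : Finset (Fin (m + 3))}
    (hU : IsControlSet (shiftNet m) U) : 2 ≤ U.card := by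
  by_contra hcard
  have hU1 : ∀ a ∈ U, ∀ b ∈ U, a = b := Finset.card_le_one.mp (by omega)
  have hlast0 : Fin.last (m + 2) ≠ 0 := by simp [Fin.ext_iff]
  have hlast1 : Fin.last (m + 2) ≠ 1 := by simp [Fin.ext_iff]
  obtain ⟨Z, hZne, hZU, hZ⟩ : ∃ Z : Finset (Fin (m + 3)), Z.Nonempty ∧ Disjoint Z U ∧
      ∀ i ∈ Z, ∃ j ∈ shiftInputs m i, j ∈ Z := by
    by_cases h0 : 0 ∈ U
    · refine ⟨Finset.univ.erase 0, ⟨1, by simp⟩, ?_, fun i hi => ?_⟩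
      · exact Finset.disjoint_left.mpr fun i hi hiU => by simp [hU1 i hiU 0 h0] at hi
      · by_cases h1 : i = 1
        · exact ⟨Fin.last _, by simp [h1], by simp [hlast0]⟩
        · exact ⟨i - 1, by simp [shiftInputs_of_ne (Finset.ne_of_mem_erase hi) h1],
            by simpa using sub_ne_zero.mpr h1⟩
    by_cases h1 : 1 ∈ U
    · refine ⟨{0, Fin.last _}, ⟨0, by simp⟩, ?_, fun i hi => ?_⟩
      · exact Finset.disjoint_left.mpr fun i hi hiU => by
          obtain rfl | rfl : i = _ ∨ i = _ := by simpa using hi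
          exacts [h0 hiU, hlast1 (hU1 _ hiU 1 h1)]
      · obtain rfl | rfl : i = _ ∨ i = _ := by simpa using hi
        · exact ⟨Fin.last _, by simp⟩
        · exact ⟨0, by simp [shiftInputs_of_ne hlast0 hlast1]⟩
    · refine ⟨{0, 1}, ⟨0, by simp⟩, ?_, fun i hi => ?_⟩
      · exact Finset.disjoint_left.mpr fun i hi hiU => by
          obtain rfl | rfl : i = _ ∨ i = _ := by simpa using hi
          exacts [h0 hiU, h1 hiU]
      · obtain rfl | rfl : i = _ ∨ i = _ := by simpa using hi
        · exact ⟨1, by simp⟩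
        · exact ⟨0, by simp⟩
  exact not_isControlSet_andFun hZne hZU hZ hU

end ShiftNet

/-- For every `n > 2`, there exists a 2-AND-BN on `n` nodes (each update
function the AND of two distinct inputs, no negations; outdegree unconstrained) whose
minimum control node set has size 2. -/
theorem stmt10 (n : ℕ) (hn : 2 < n) :
    ∃ F : Fin n → (Fin n → Bool) → Bool, (∀ i, IsSimpleKAnd 2 (F i)) ∧
      (∃ U : Finset (Fin n), IsControlSet F U ∧ U.card = 2) ∧
      ∀ U : Finset (Fin n), IsControlSet F U → 2 ≤ U.card := by
  obtain ⟨m, rfl⟩ : ∃ m, n = m + 3 := ⟨n - 3, by omega⟩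
  refine ⟨shiftNet m, fun i => ⟨_, card_shiftInputs i, rfl⟩,
    ⟨{0, 1}, isControlSet_shiftNet, Finset.card_pair (by simp)⟩,
    fun U => two_le_card_of_isControlSet_shiftNet⟩

end BN
end

section
/- For every simple 2-2-AND-BN on n nodes, every control node set U satisfies |U| ≥ n/3. -/
namespace BN

variable {n : ℕ}

/-!
Let `v` be a node that is neither in `U` nor shares an input with a node of `U`. Then the state
in which `v` alone is `false` is unreachable: each input `s` of `v` also feeds some node `a ≠ v`,
which is uncontrolled and must become `true`, so `s` was `true`, hence all inputs of `v` were
`true` and `v` becomes `true` as well. So every node is some `u ∈ U` or shares one of the two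
inputs of `u` with it. Since each input feeds exactly two nodes, one of them `u`, each `u` accounts
for at most three nodes, and `n ≤ 3 |U|`; in a `k`-`k` network the same count gives
`n ≤ (k (k - 1) + 1) |U|`.
-/

theorem depends_andFun (S : Finset (Fin n)) (j : Fin n) : Depends (andFun S) j ↔ j ∈ S := by
  constructor
  · rintro ⟨x, hx⟩
    by_contra hj
    refine hx (decide_eq_decide.mpr (forall₂_congr fun i hi => ?_))
    rw [Function.update_of_ne (ne_of_mem_of_not_mem hi hj)]
  · exact fun hj => ⟨fun _ => true, by simpa [andFun, Function.update_apply] using hj⟩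

theorem traj_succ_of_notMem (F : Fin n → (Fin n → Bool) → Bool) {U : Finset (Fin n)}
    (u : ℕ → Fin n → Bool) (x0 : Fin n → Bool) (t : ℕ) {i : Fin n} (hi : i ∉ U) :
    traj F U u x0 (t + 1) i = F i (traj F U u x0 t) := by
  simp [traj, hi]

def outNodes (S : Fin n → Finset (Fin n)) (s : Fin n) : Finset (Fin n) :=
  Finset.univ.filter fun a => s ∈ S a

theorem outSet_andFun (S : Fin n → Finset (Fin n)) (s : Fin n) :
    outSet (fun i => andFun (S i)) s = outNodes S s := by
  ext a
  simp [outSet, outNodes, depends_andFun]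

def closedSiblings (S : Fin n → Finset (Fin n)) (u : Fin n) : Finset (Fin n) :=
  insert u ((S u).biUnion (outNodes S))

theorem card_closedSiblings_le (S : Fin n → Finset (Fin n)) (u : Fin n) :
    (closedSiblings S u).card ≤ 1 + ∑ s ∈ S u, ((outNodes S s).card - 1) := by
  have hsub : closedSiblings S u ⊆ insert u ((S u).biUnion fun s => (outNodes S s).erase u) := by
    intro v hv
    simp only [closedSiblings, Finset.mem_insert, Finset.mem_biUnion, Finset.mem_erase] at hv ⊢
    grind
  calc (closedSiblings S u).card
      ≤ (insert u ((S u).biUnion fun s => (outNodes S s).erase u)).card := Finset.card_le_card hsub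
    _ ≤ 1 + ∑ s ∈ S u, ((outNodes S s).erase u).card := by
        grw [Finset.card_insert_le, Finset.card_biUnion_le]; omega
    _ = 1 + ∑ s ∈ S u, ((outNodes S s).card - 1) := by
        congr 1
        refine Finset.sum_congr rfl fun s hs => Finset.card_erase_of_mem ?_
        simpa [outNodes] using hs

theorem exists_mem_closedSiblings_of_isControlSet {S : Fin n → Finset (Fin n)}
    (hout : ∀ s, 1 < (outNodes S s).card) {U : Finset (Fin n)}
    (hU : IsControlSet (fun i => andFun (S i)) U) (v : Fin n) :
    ∃ u ∈ U, v ∈ closedSiblings S u := by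
  by_contra! hcov
  have hvU : v ∉ U := fun hv => hcov v hv (Finset.mem_insert_self v _)
  obtain ⟨_ | t, ht, u, hreach⟩ := hU (fun _ => false) (fun w => decide (w ≠ v))
  · omega
  set y := traj (fun i => andFun (S i)) U u (fun _ => false) t
  have hstep : ∀ i ∉ U, andFun (S i) y = decide (i ≠ v) := fun i hi => by
    rw [← traj_succ_of_notMem (fun i => andFun (S i)) u _ t hi, hreach]
  have hinputs : ∀ s ∈ S v, y s = true := by
    intro s hs
    obtain ⟨a, ha, hav⟩ := Finset.exists_mem_ne (hout s) v
    have hsa : s ∈ S a := by simpa [outNodes] using ha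
    have haU : a ∉ U := fun haU => hcov a haU <|
      Finset.mem_insert_of_mem (Finset.mem_biUnion.mpr ⟨s, hsa, by simpa [outNodes] using hs⟩)
    have := hstep a haU
    simp only [andFun, ne_eq, hav, not_false_eq_true, decide_true, decide_eq_true_eq] at this
    exact this s hsa
  have := hstep v hvU
  simp only [andFun, ne_eq, not_true_eq_false, decide_false, decide_eq_false_iff_not] at this
  exact this hinputs

theorem le_sum_card_closedSiblings {S : Fin n → Finset (Fin n)} {U : Finset (Fin n)}
    (hcov : ∀ v, ∃ u ∈ U, v ∈ closedSiblings S u) :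
    n ≤ ∑ u ∈ U, (closedSiblings S u).card := by
  calc n = (Finset.univ : Finset (Fin n)).card := (Finset.card_fin n).symm
    _ ≤ (U.biUnion (closedSiblings S)).card :=
        Finset.card_le_card fun v _ => Finset.mem_biUnion.mpr (hcov v)
    _ ≤ ∑ u ∈ U, (closedSiblings S u).card := Finset.card_biUnion_le

theorem IsSimpleKKAndBN.exists_eq_andFun {k : ℕ} {F : Fin n → (Fin n → Bool) → Bool}
    (hF : IsSimpleKKAndBN k F) :
    ∃ S : Fin n → Finset (Fin n), F = (fun i => andFun (S i)) ∧ (∀ i, (S i).card = k) ∧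
      ∀ s, (outNodes S s).card = k := by
  choose S hcard hS using hF.1
  obtain rfl : F = fun i => andFun (S i) := funext hS
  refine ⟨S, rfl, hcard, fun s => ?_⟩
  rw [← Set.ncard_coe_finset, ← outSet_andFun]
  exact (hF.2 s).2

theorem IsSimpleKKAndBN.le_mul_card_of_isControlSet {k : ℕ} {F : Fin n → (Fin n → Bool) → Bool}
    (hF : IsSimpleKKAndBN k F) (hk : 2 ≤ k) {U : Finset (Fin n)} (hU : IsControlSet F U) :
    n ≤ (k * (k - 1) + 1) * U.card := by
  obtain ⟨S, rfl, hin, hout⟩ := hF.exists_eq_andFun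
  have hcov := exists_mem_closedSiblings_of_isControlSet (fun s => by have := hout s; omega) hU
  calc n ≤ ∑ u ∈ U, (closedSiblings S u).card := le_sum_card_closedSiblings hcov
    _ ≤ ∑ _u ∈ U, (k * (k - 1) + 1) := Finset.sum_le_sum fun u _ => by
        grw [card_closedSiblings_le]
        simp [hout, hin, add_comm]
    _ = (k * (k - 1) + 1) * U.card := by rw [Finset.sum_const, smul_eq_mul, mul_comm]

/-- For every simple 2-2-AND-BN on `n` nodes, every control node set `U`
satisfies `|U| ≥ n / 3`. -/
theorem stmt12 (n : ℕ) (F : Fin n → (Fin n → Bool) → Bool) (hF : IsSimpleKKAndBN 2 F)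
    (U : Finset (Fin n)) (hU : IsControlSet F U) :
    (n : ℚ) / 3 ≤ U.card := by
  have h : n ≤ 3 * U.card := hF.le_mul_card_of_isControlSet le_rfl hU
  rw [div_le_iff₀ three_pos, mul_comm]
  exact_mod_cast h

end BN
end
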